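/- arXiv:math/0510321 — 2 statements merged into one kernel-verified Lean document; each statement's English description precedes it below -/
import Mathlib

section
/- Let ε ∈ {−1, 1}, K ∈ ℝ with K < −1, set c = 1/(εK − 1), and for t ∈ [0,1] define F(t) = ((1+c)K − εc(1−t)²)/((1+ct)²). Then K − 1 ≤ F(t) ≤ K + 1 < 0 for all t ∈ [0,1]; in particular F is bounded away from 0. -/
theorem stmt_15 (ε K c : ℝ) (hε : ε = 1 ∨ ε = -1) (hK : K < -1)
    (hc : c = 1 / (ε * K - 1))
    (F : ℝ → ℝ)
    (hF : ∀ t, F t = ((1 + c) * K - ε * c * (1 - t) ^ 2) / (1 + c * t) ^ 2) :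
    (∀ t ∈ Set.Icc (0 : ℝ) 1, K - 1 ≤ F t ∧ F t ≤ K + 1) ∧ K + 1 < 0 := by
  refine ⟨?_, by linarith⟩
  rintro t ⟨ht0, ht1⟩
  rw [hF t]
  rcases hε with hε | hε <;> subst hε <;> subst hc
  · -- ε = 1, c = 1/(K-1)
    have hne : K - 1 ≠ 0 := by intro h; nlinarith
    have k1 : (1 + 1/((1:ℝ)*K-1)) * K - 1 * (1/((1:ℝ)*K-1)) * (1-t)^2
        - (K-1)*(1 + (1/((1:ℝ)*K-1))*t)^2
        = 2*(1/((1:ℝ)*K-1))*(1-t)*(K-1+t) := by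
      field_simp
      ring
    have k2 : (K+1)*(1 + (1/((1:ℝ)*K-1))*t)^2
        - ((1 + 1/((1:ℝ)*K-1)) * K - 1 * (1/((1:ℝ)*K-1)) * (1-t)^2)
        = 2*(1/((1:ℝ)*K-1))^2*t*K*(K-1+t) := by
      field_simp
      ring
    set c := 1/((1:ℝ)*K-1) with hcdef
    have hcneg : c < 0 := by
      rw [hcdef]; apply div_neg_of_pos_of_neg one_pos; linarith
    have hclb : -1/2 < c := by
      rw [hcdef, lt_div_iff_of_neg (by linarith : (1:ℝ)*K-1 < 0)]
      nlinarith
    have hpos : 0 < 1 + c * t := by nlinarith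
    have hsq : 0 < (1 + c * t) ^ 2 := by positivity
    have hnn1 : 0 ≤ 2*c*(1-t)*(K-1+t) := by
      nlinarith [mul_nonneg (mul_nonneg (by linarith : (0:ℝ) ≤ -c) (by linarith : (0:ℝ) ≤ 1-t)) (by linarith : (0:ℝ) ≤ -(K-1+t))]
    have hnn2 : 0 ≤ 2*c^2*t*K*(K-1+t) := by
      nlinarith [mul_nonneg (mul_nonneg (mul_nonneg (by positivity : (0:ℝ) ≤ 2*c^2) ht0) (by linarith : (0:ℝ) ≤ -K)) (by linarith : (0:ℝ) ≤ -(K-1+t))]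
    constructor
    · rw [le_div_iff₀ hsq]; linarith [k1, hnn1]
    · rw [div_le_iff₀ hsq]; linarith [k2, hnn2]
  · -- ε = -1, c = 1/(-K-1)
    set c := 1/((-1:ℝ)*K-1) with hcdef
    have h0 : (-1:ℝ)*K - 1 ≠ 0 := by intro h; nlinarith
    have hrel : c*K + c + 1 = 0 := by
      have h1 : c * (-1*K-1) = 1 := by
        rw [hcdef]
        field_simp
        exact div_self (by intro h; nlinarith)
      linarith [h1]
    have k1 : (1 + c) * K - -1 * c * (1 - t)^2 - (K-1)*(1+c*t)^2
        = 2*c^2*K*t*(K+1-t) := by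
      linear_combination (1 - 2*c*K*t + c*t^2) * hrel
    have k2 : (K+1)*(1+c*t)^2 - ((1+c)*K - -1*c*(1-t)^2)
        = 2*c^2*(K+1)*(1-t)*(K+1-t) := by
      linear_combination (1 - 2*c - 2*c*K + 2*c*t*K + 4*c*t - c*t^2) * hrel
    have hcpos : 0 < c := by
      rw [hcdef]; apply div_pos one_pos; linarith
    have hpos : 0 < 1 + c * t := by nlinarith
    have hsq : 0 < (1 + c * t) ^ 2 := by positivity
    have hnn1 : 0 ≤ 2*c^2*K*t*(K+1-t) := by
      nlinarith [mul_nonneg (mul_nonneg (mul_nonneg (by positivity : (0:ℝ) ≤ 2*c^2) ht0) (by linarith : (0:ℝ) ≤ -K)) (by linarith : (0:ℝ) ≤ -(K+1-t))]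
    have hnn2 : 0 ≤ 2*c^2*(K+1)*(1-t)*(K+1-t) := by
      nlinarith [mul_nonneg (mul_nonneg (mul_nonneg (by positivity : (0:ℝ) ≤ 2*c^2) (by linarith : (0:ℝ) ≤ 1-t)) (by linarith : (0:ℝ) ≤ -(K+1))) (by linarith : (0:ℝ) ≤ -(K+1-t))]
    constructor
    · rw [le_div_iff₀ hsq]; linarith [k1, hnn1]
    · rw [div_le_iff₀ hsq]; linarith [k2, hnn2]
end

section
/- There is no Lorentzian metric (i.e. a smooth quadratic form of signature (1,1) at every point) on the 2-sphere S². Consequently, if a compact immersed surface S ⊂ S²×ℝ has positive Gaussian curvature K(I) > 0 (hence S is a topological sphere by Gauss–Bonnet) and its height function satisfies ‖∇h‖² < 1 − K(I) at every point, a contradiction arises: the Gauss equation K(I) = K(I,II) + (1 − ‖∇h‖²) forces K(I,II) < 0 everywhere, making II a Lorentzian metric on a sphere. -/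
open Real Set Complex

noncomputable section

abbrev E3 := EuclideanSpace ℝ (Fin 3)




def v3 (a b c : ℝ) : E3 := (WithLp.equiv 2 (Fin 3 → ℝ)).symm ![a, b, c]

@[simp] lemma v3_apply (a b c : ℝ) (i : Fin 3) : v3 a b c i = ![a, b, c] i := rfl

def xx (s u : ℝ) : E3 := v3 (Real.sin s * Real.cos u) (Real.sin s * Real.sin u) (Real.cos s)
def ee1 (s u : ℝ) : E3 := v3 (Real.cos s * Real.cos u) (Real.cos s * Real.sin u) (-Real.sin s)
def ee2 (u : ℝ) : E3 := v3 (-Real.sin u) (Real.cos u) 0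

lemma norm_xx (s u : ℝ) : ‖xx s u‖ = 1 := by
  rw [EuclideanSpace.norm_eq]
  rw [show (1:ℝ) = √1 from (Real.sqrt_one).symm]
  congr 1
  simp only [Fin.sum_univ_three, xx, v3_apply, Real.norm_eq_abs, sq_abs,
    Matrix.cons_val_zero, Matrix.cons_val_one, Matrix.head_cons, Matrix.cons_val_two,
    Matrix.tail_cons]
  nlinarith [Real.sin_sq_add_cos_sq s, Real.sin_sq_add_cos_sq u,
    _root_.sq_abs (Real.sin s * Real.cos u), _root_.sq_abs (Real.sin s * Real.sin u), _root_.sq_abs (Real.cos s)]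

lemma inner_three (v w : E3) : (inner ℝ v w : ℝ) = v 0 * w 0 + v 1 * w 1 + v 2 * w 2 := by
  rw [PiLp.inner_apply]
  simp [Fin.sum_univ_three, RCLike.inner_apply]
  ring


lemma expand (s u : ℝ) (v : E3) (hv : (inner ℝ v (xx s u) : ℝ) = 0) :
    v = (inner ℝ v (ee1 s u) : ℝ) • ee1 s u + (inner ℝ v (ee2 u) : ℝ) • ee2 u := by
  rw [inner_three] at hv
  simp only [xx, v3_apply, Matrix.cons_val_zero, Matrix.cons_val_one, Matrix.head_cons,
    Matrix.cons_val_two, Matrix.tail_cons] at hv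
  have ps := Real.sin_sq_add_cos_sq s
  have pu := Real.sin_sq_add_cos_sq u
  ext i
  fin_cases i <;>
    simp only [PiLp.add_apply, PiLp.smul_apply, inner_three, ee1, ee2, v3_apply,
      smul_eq_mul, Fin.zero_eta, Fin.mk_one, Matrix.cons_val_zero, Matrix.cons_val_one,
      Matrix.head_cons, Matrix.cons_val_two, Matrix.tail_cons, Fin.reduceFinMk]
  · linear_combination (Real.sin s * Real.cos u) * hv + (-(v 0) * Real.cos u ^ 2 - v 1 * Real.sin u * Real.cos u) * ps
      + (-(v 0)) * pu
  · linear_combination (Real.sin s * Real.sin u) * hv + (-(v 0) * Real.sin u * Real.cos u - v 1 * Real.sin u ^ 2) * ps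
      + (-(v 1)) * pu
  · linear_combination (Real.cos s) * hv + (-(v 2)) * ps



lemma bilin (M : E3 →L[ℝ] E3 →L[ℝ] ℝ) (a b : E3) (α β γ δ : ℝ) :
    M (α • a + β • b) (γ • a + δ • b)
      = α*γ * M a a + α*δ * M a b + β*γ * M b a + β*δ * M b b := by
  simp only [map_add, map_smul, ContinuousLinearMap.add_apply, ContinuousLinearMap.smul_apply,
    smul_eq_mul]
  ring

lemma disc_neg {p q r : ℝ} (h1 : ∃ a b : ℝ, 0 < p*(a*a) + 2*q*(a*b) + r*(b*b))
    (h2 : ∃ c d : ℝ, p*(c*c) + 2*q*(c*d) + r*(d*d) < 0) : p*r - q^2 < 0 := by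
  obtain ⟨a, b, h1⟩ := h1
  obtain ⟨c, d, h2⟩ := h2
  by_contra h
  push_neg at h
  rcases eq_or_ne p 0 with hp | hp
  · subst hp
    have hq : q = 0 := by nlinarith [sq_nonneg q]
    subst hq
    nlinarith [mul_pos h1 (neg_pos.2 h2), sq_nonneg (r*(b*d))]
  · have k1 : 0 ≤ p * (p*(a*a) + 2*q*(a*b) + r*(b*b)) := by nlinarith [sq_nonneg (p*a + q*b)]
    have k2 : 0 ≤ p * (p*(c*c) + 2*q*(c*d) + r*(d*d)) := by nlinarith [sq_nonneg (p*c + q*d)]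
    rcases lt_or_gt_of_ne hp with hp' | hp'
    · nlinarith
    · nlinarith

lemma exp_neg_two (θ : ℝ) :
    Complex.exp ((-(2*θ) : ℝ) * Complex.I)
      = ((Real.cos θ : ℂ) - (Real.sin θ : ℂ) * Complex.I)^2 := by
  rw [Complex.exp_mul_I, ← Complex.ofReal_cos, ← Complex.ofReal_sin,
    Real.cos_neg, Real.sin_neg, Real.cos_two_mul, Real.sin_two_mul]
  push_cast
  linear_combination (-(Complex.sin (θ:ℂ)^2)) * Complex.I_sq + Complex.sin_sq_add_cos_sq (θ:ℂ)

lemma rot_core (A B C θ : ℝ) :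
    ((Real.cos θ^2*A + 2*(Real.cos θ*Real.sin θ)*B + Real.sin θ^2*C
        - (Real.sin θ^2*A - 2*(Real.cos θ*Real.sin θ)*B + Real.cos θ^2*C) : ℝ) : ℂ)
      + 2*((-(Real.cos θ*Real.sin θ))*A + (Real.cos θ^2 - Real.sin θ^2)*B
          + (Real.cos θ*Real.sin θ)*C : ℝ) * Complex.I
      = Complex.exp ((-(2*θ) : ℝ) * Complex.I) * (((A - C : ℝ) : ℂ) + 2*(B:ℝ)*Complex.I) := by
  rw [exp_neg_two]
  push_cast
  linear_combination ((4*Complex.cos (θ:ℂ)*Complex.sin (θ:ℂ)*(B:ℂ)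
    - Complex.sin (θ:ℂ)^2*((A:ℂ)-(C:ℂ))) + (-(2*Complex.sin (θ:ℂ)^2*(B:ℂ)))*Complex.I)
    * Complex.I_sq



lemma ratio_slit {z w : ℂ} (hw : w ≠ 0) (h : ‖z - w‖ < ‖w‖) : z / w ∈ Complex.slitPlane := by
  rw [Complex.mem_slitPlane_iff]
  left
  have h1 : ‖z/w - 1‖ < 1 := by
    rw [show z/w - 1 = (z - w)/w by field_simp]
    rw [norm_div]
    rw [div_lt_one (norm_pos_iff.2 hw)]
    exact h
  have h2 : |(z/w - 1).re| ≤ ‖z/w - 1‖ := by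
    simpa using Complex.abs_re_le_norm (z/w - 1)
  have : |(z/w).re - 1| < 1 := by
    simpa [Complex.sub_re] using lt_of_le_of_lt h2 h1
  cases abs_lt.1 this with
  | intro h3 h4 => linarith

/-- Lifting a continuous nonvanishing function through `exp` on a compact interval. -/
lemma exists_lift (f : ℝ → ℂ) (hf : Continuous f) (h0 : ∀ t, f t ≠ 0) (a b : ℝ) (hab : a ≤ b) :
    ∃ ℓ : ℝ → ℂ, Continuous ℓ ∧ ∀ t ∈ Icc a b, Complex.exp (ℓ t) = f t := by
  -- minimum of ‖f‖ on [a,b]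
  obtain ⟨t0, ht0, hmin⟩ := isCompact_Icc.exists_isMinOn (α := ℝ) ⟨a, le_refl a, hab⟩
    (hf.norm.continuousOn (s := Icc a b))
  set m : ℝ := ‖f t0‖ with hm
  have hmpos : 0 < m := norm_pos_iff.2 (h0 t0)
  have hmle : ∀ t ∈ Icc a b, m ≤ ‖f t‖ := fun t ht => hmin ht
  -- uniform continuity
  have huc : UniformContinuousOn f (Icc a b) :=
    isCompact_Icc.uniformContinuousOn_of_continuous hf.continuousOn
  rw [Metric.uniformContinuousOn_iff] at huc
  obtain ⟨δ, hδ, hδ'⟩ := huc m hmpos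
  -- choose n
  obtain ⟨n, hn⟩ := exists_nat_gt ((b - a)/δ)
  have hn1 : 0 < (n:ℝ) + 1 := by positivity
  set N : ℕ := n + 1 with hN
  have hNpos : 0 < (N:ℝ) := by exact_mod_cast Nat.succ_pos n
  set h : ℝ := (b - a)/N with hh
  have hh0 : 0 ≤ h := div_nonneg (by linarith) hNpos.le
  have hhδ : h < δ := by
    rw [hh, div_lt_iff₀ hNpos]
    have : (b - a)/δ < N := by
      have : (n:ℝ) ≤ (N:ℝ) := by exact_mod_cast Nat.le_succ n
      linarith
    calc b - a = ((b-a)/δ) * δ := by field_simp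
    _ < (N:ℝ) * δ := by
        apply mul_lt_mul_of_pos_right this hδ
    _ = δ * N := by ring
  have key : ∀ k : ℕ, k ≤ N → ∃ ℓ : ℝ → ℂ, Continuous ℓ ∧
      ∀ t ∈ Icc a (a + k*h), Complex.exp (ℓ t) = f t := by
    intro k hk
    induction k with
    | zero =>
      refine ⟨fun _ => Complex.log (f a), continuous_const, ?_⟩
      intro t ht
      simp only [Nat.cast_zero, zero_mul, add_zero] at ht
      have : t = a := le_antisymm ht.2 ht.1
      rw [this, Complex.exp_log (h0 a)]
    | succ k ih =>
      obtain ⟨ℓ, hℓc, hℓ⟩ := ih (le_of_lt (Nat.lt_of_succ_le hk))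
      set c : ℝ := a + k*h with hc
      have hca : a ≤ c := by
        have : 0 ≤ (k:ℝ)*h := mul_nonneg (Nat.cast_nonneg k) hh0
        linarith
      have hcb : c + h ≤ b := by
        have hkN : (k:ℝ) + 1 ≤ (N:ℝ) := by exact_mod_cast hk
        have : c + h = a + ((k:ℝ)+1)*h := by rw [hc]; ring
        rw [this]
        have : ((k:ℝ)+1)*h ≤ (N:ℝ)*h := mul_le_mul_of_nonneg_right hkN hh0
        have hNh : (N:ℝ)*h = b - a := by rw [hh]; field_simp
        linarith
      set clamp : ℝ → ℝ := fun t => min (max t c) (c + h) with hclamp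
      have hclampc : Continuous clamp := (continuous_id.max continuous_const).min continuous_const
      have hclamp_mem : ∀ t, clamp t ∈ Icc a b := by
        intro t
        constructor
        · have : c ≤ clamp t := le_min (le_max_right _ _) (by linarith)
          linarith
        · exact le_trans (min_le_right _ _) hcb
      have hclamp_close : ∀ t, dist (clamp t) c < δ := by
        intro t
        have h1 : c ≤ clamp t := le_min (le_max_right _ _) (by linarith)
        have h2 : clamp t ≤ c + h := min_le_right _ _
        rw [Real.dist_eq, _root_.abs_of_nonneg (by linarith)]
        linarith
      have hcmem : c ∈ Icc a b := ⟨hca, by linarith⟩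
      have hratio : ∀ t, f (clamp t) / f c ∈ Complex.slitPlane := by
        intro t
        apply ratio_slit (h0 c)
        calc ‖f (clamp t) - f c‖ = dist (f (clamp t)) (f c) := by rw [dist_eq_norm]
        _ < m := hδ' (clamp t) (hclamp_mem t) c hcmem (hclamp_close t)
        _ ≤ ‖f c‖ := hmle c hcmem
      refine ⟨fun t => ℓ (min t c) + Complex.log (f (clamp t) / f c), ?_, ?_⟩
      · apply Continuous.add
        · exact hℓc.comp (continuous_id.min continuous_const)
        · exact Continuous.clog ((hf.comp hclampc).div_const _) hratio
      · intro t ht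
        show Complex.exp (ℓ (min t c) + Complex.log (f (clamp t) / f c)) = f t
        have htc : t ≤ c + h := by
          have : a + (k+1:ℕ)*h = c + h := by rw [hc]; push_cast; ring
          rw [this] at ht
          exact ht.2
        rcases le_or_gt t c with h1 | h1
        · have e1 : min t c = t := min_eq_left h1
          have e2 : clamp t = c := by
            rw [hclamp]
            simp only
            rw [max_eq_right h1, min_eq_left (by linarith)]
          rw [e1, e2, div_self (h0 c), Complex.log_one, add_zero]
          exact hℓ t ⟨ht.1, by rw [hc] at h1 ⊢; exact h1⟩
        · have e1 : min t c = c := min_eq_right h1.le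
          have e2 : clamp t = t := by
            rw [hclamp]
            simp only
            rw [max_eq_left h1.le, min_eq_left htc]
          rw [e1, e2, Complex.exp_add, Complex.exp_log (div_ne_zero (h0 t) (h0 c)),
            hℓ c ⟨hca, le_refl c⟩]
          rw [mul_div_assoc', mul_comm, mul_div_assoc, div_self (h0 c), mul_one]
      done
  obtain ⟨ℓ, h1, h2⟩ := key N (le_refl N)
  refine ⟨ℓ, h1, ?_⟩
  have : a + (N:ℝ)*h = b := by rw [hh]; field_simp; ring
  rw [← this]
  exact h2



lemma int_valued_const {φ : ℝ → ℝ} (hφ : Continuous φ) {a b : ℝ} (hab : a ≤ b)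
    (hint : ∀ t ∈ Icc a b, ∃ n : ℤ, φ t = 2*π*n) : φ a = φ b := by
  by_contra hne
  obtain ⟨na, hna⟩ := hint a ⟨le_refl a, hab⟩
  obtain ⟨nb, hnb⟩ := hint b ⟨hab, le_refl b⟩
  have hpi : (0:ℝ) < π := Real.pi_pos
  have hnanb : na ≠ nb := by
    intro h; apply hne; rw [hna, hnb, h]
  -- a value strictly between, of the form 2π(min+1/2)
  rcases hnanb.lt_or_gt with hlt | hlt
  · -- na < nb
    set y : ℝ := 2*π*na + π with hy
    have h1 : φ a < y := by rw [hna, hy]; linarith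
    have h2 : y < φ b := by
      rw [hnb, hy]
      have : (na:ℝ) + 1 ≤ (nb:ℝ) := by exact_mod_cast hlt
      nlinarith
    obtain ⟨t, ht, hft⟩ := intermediate_value_Icc hab hφ.continuousOn
      (mem_Icc.2 ⟨h1.le, h2.le⟩)
    obtain ⟨m, hm⟩ := hint t ht
    rw [hft] at hm
    have : (2*(m:ℝ)) = 2*(na:ℝ) + 1 := by
      apply mul_left_cancel₀ Real.pi_ne_zero
      rw [hy] at hm
      linarith [hm]
    have : (2*m : ℤ) = 2*na + 1 := by exact_mod_cast this
    omega
  · set y : ℝ := 2*π*nb + π with hy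
    have h1 : φ b < y := by rw [hnb, hy]; linarith
    have h2 : y < φ a := by
      rw [hna, hy]
      have : (nb:ℝ) + 1 ≤ (na:ℝ) := by exact_mod_cast hlt
      nlinarith
    obtain ⟨t, ht, hft⟩ := intermediate_value_Icc' hab hφ.continuousOn
      (mem_Icc.2 ⟨h1.le, h2.le⟩)
    obtain ⟨m, hm⟩ := hint t ht
    rw [hft] at hm
    have : (2*(m:ℝ)) = 2*(nb:ℝ) + 1 := by
      apply mul_left_cancel₀ Real.pi_ne_zero
      rw [hy] at hm
      linarith [hm]
    have : (2*m : ℤ) = 2*nb + 1 := by exact_mod_cast this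
    omega

lemma increment_unique {f ℓ ℓ' : ℝ → ℂ} (hℓc : Continuous ℓ) (hℓ'c : Continuous ℓ')
    {a b : ℝ} (hab : a ≤ b)
    (hl : ∀ t ∈ Icc a b, Complex.exp (ℓ t) = f t)
    (hl' : ∀ t ∈ Icc a b, Complex.exp (ℓ' t) = f t) :
    ℓ b - ℓ a = ℓ' b - ℓ' a := by
  set g : ℝ → ℂ := fun t => ℓ t - ℓ' t with hg
  have hexp1 : ∀ t ∈ Icc a b, Complex.exp (g t) = 1 := by
    intro t ht
    rw [hg]
    simp only
    rw [Complex.exp_sub, hl t ht, hl' t ht, div_self]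
    rw [← hl t ht]
    exact Complex.exp_ne_zero _
  have hint : ∀ t ∈ Icc a b, ∃ n : ℤ, (g t).im = 2*π*n := by
    intro t ht
    obtain ⟨n, hn⟩ := Complex.exp_eq_one_iff.1 (hexp1 t ht)
    exact ⟨n, by rw [hn]; simp; ring⟩
  have hφ : Continuous fun t => (g t).im :=
    Complex.continuous_im.comp (hℓc.sub hℓ'c)
  have him : (g a).im = (g b).im := int_valued_const hφ hab hint
  obtain ⟨na, hna⟩ := Complex.exp_eq_one_iff.1 (hexp1 a ⟨le_refl a, hab⟩)
  obtain ⟨nb, hnb⟩ := Complex.exp_eq_one_iff.1 (hexp1 b ⟨hab, le_refl b⟩)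
  have : na = nb := by
    rw [hna, hnb] at him
    simp at him
    exact_mod_cast him
  have hgab : g a = g b := by rw [hna, hnb, this]
  have : ℓ a - ℓ' a = ℓ b - ℓ' b := hgab
  linear_combination -this



-- frame identities at the poles
lemma x_pole0 (u : ℝ) : xx 0 u = xx 0 0 := by
  ext i; fin_cases i <;> simp [xx]
lemma x_polepi (u : ℝ) : xx π u = xx π 0 := by
  ext i; fin_cases i <;> simp [xx]
lemma frame0a (u : ℝ) : ee1 0 u = Real.cos u • ee1 0 0 + Real.sin u • ee2 0 := by
  ext i; fin_cases i <;>
    simp [ee1, ee2, PiLp.add_apply, PiLp.smul_apply]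
lemma frame0b (u : ℝ) : ee2 u = (-Real.sin u) • ee1 0 0 + Real.cos u • ee2 0 := by
  ext i; fin_cases i <;>
    simp [ee1, ee2, PiLp.add_apply, PiLp.smul_apply]
lemma framepia (u : ℝ) : ee1 π u = Real.cos u • ee1 π 0 + (-Real.sin u) • ee2 0 := by
  ext i; fin_cases i <;>
    simp [ee1, ee2, PiLp.add_apply, PiLp.smul_apply]
lemma framepib (u : ℝ) : ee2 u = Real.sin u • ee1 π 0 + Real.cos u • ee2 0 := by
  ext i; fin_cases i <;>
    simp [ee1, ee2, PiLp.add_apply, PiLp.smul_apply]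
-- periodicity
lemma x_per (s : ℝ) : xx s (2*π) = xx s 0 := by
  ext i; fin_cases i <;> simp [xx]
lemma e1_per (s : ℝ) : ee1 s (2*π) = ee1 s 0 := by
  ext i; fin_cases i <;> simp [ee1]
lemma e2_per : ee2 (2*π) = ee2 0 := by
  ext i; fin_cases i <;> simp [ee2]


section Wsection

variable (Bf : E3 → E3 →L[ℝ] E3 →L[ℝ] ℝ)

def pf (s u : ℝ) : ℝ := Bf (xx s u) (ee1 s u) (ee1 s u)
def qf (s u : ℝ) : ℝ := Bf (xx s u) (ee1 s u) (ee2 u)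
def rf (s u : ℝ) : ℝ := Bf (xx s u) (ee2 u) (ee2 u)

def Wf (s u : ℝ) : ℂ :=
  ((pf Bf s u - rf Bf s u : ℝ) : ℂ) + 2*((qf Bf s u : ℝ) : ℂ)*Complex.I

lemma W_rot (M : E3 →L[ℝ] E3 →L[ℝ] ℝ) (a b : E3) (hsymM : M a b = M b a) (θ : ℝ) :
    ((M (Real.cos θ • a + Real.sin θ • b) (Real.cos θ • a + Real.sin θ • b)
        - M ((-Real.sin θ) • a + Real.cos θ • b) ((-Real.sin θ) • a + Real.cos θ • b) : ℝ) : ℂ)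
      + 2*((M (Real.cos θ • a + Real.sin θ • b) ((-Real.sin θ) • a + Real.cos θ • b) : ℝ) : ℂ)
        * Complex.I
    = Complex.exp ((-(2*θ) : ℝ) * Complex.I)
        * (((M a a - M b b : ℝ) : ℂ) + 2*((M a b : ℝ) : ℂ)*Complex.I) := by
  rw [bilin, bilin, bilin, hsymM, exp_neg_two]
  push_cast
  linear_combination ((4*Complex.cos (θ:ℂ)*Complex.sin (θ:ℂ)*((M b a : ℝ):ℂ)
    - Complex.sin (θ:ℂ)^2*(((M a a : ℝ):ℂ)-((M b b : ℝ):ℂ)))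
    + (-(2*Complex.sin (θ:ℂ)^2*((M b a : ℝ):ℂ)))*Complex.I) * Complex.I_sq

variable (hsym : ∀ x v w, Bf x v w = Bf x w v)

include hsym in
lemma W_pole0 (u : ℝ) :
    Wf Bf 0 u = Complex.exp ((-(2*u) : ℝ) * Complex.I) * Wf Bf 0 0 := by
  have h := W_rot (Bf (xx 0 0)) (ee1 0 0) (ee2 0) (hsym _ _ _) u
  unfold Wf pf qf rf
  rw [x_pole0 u, frame0a u, frame0b u]
  exact h

include hsym in
lemma W_polepi (u : ℝ) :
    Wf Bf π u = Complex.exp (((2*u) : ℝ) * Complex.I) * Wf Bf π 0 := by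
  have h := W_rot (Bf (xx π 0)) (ee1 π 0) (ee2 0) (hsym _ _ _) (-u)
  simp only [Real.cos_neg, Real.sin_neg, neg_neg] at h
  rw [show ((-(2*(-u)) : ℝ) : ℂ) = (((2*u) : ℝ) : ℂ) by push_cast; ring] at h
  unfold Wf pf qf rf
  rw [x_polepi u, framepia u, framepib u]
  exact h

lemma W_per (s : ℝ) : Wf Bf s (2*π) = Wf Bf s 0 := by
  simp only [Wf, pf, qf, rf, x_per, e1_per, e2_per]

include hsym in
lemma disc_lt (hind : ∀ x : E3, ‖x‖ = 1 → ∃ v w : E3,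
      (inner ℝ v x : ℝ) = 0 ∧ (inner ℝ w x : ℝ) = 0 ∧ 0 < Bf x v v ∧ Bf x w w < 0)
    (s u : ℝ) : pf Bf s u * rf Bf s u - (qf Bf s u)^2 < 0 := by
  obtain ⟨v, w, hv, hw, hpos, hneg⟩ := hind (xx s u) (norm_xx s u)
  apply disc_neg
  · refine ⟨(inner ℝ v (ee1 s u) : ℝ), (inner ℝ v (ee2 u) : ℝ), ?_⟩
    rw [expand s u v hv] at hpos
    rw [bilin] at hpos
    rw [hsym (xx s u) (ee2 u) (ee1 s u)] at hpos
    calc (0:ℝ) < _ := hpos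
    _ = _ := by simp only [pf, qf, rf]; ring
  · refine ⟨(inner ℝ w (ee1 s u) : ℝ), (inner ℝ w (ee2 u) : ℝ), ?_⟩
    rw [expand s u w hw] at hneg
    rw [bilin] at hneg
    rw [hsym (xx s u) (ee2 u) (ee1 s u)] at hneg
    calc _ = _ := by simp only [pf, qf, rf]; ring
    _ < (0:ℝ) := hneg

include hsym in
lemma W_ne (hind : ∀ x : E3, ‖x‖ = 1 → ∃ v w : E3,
      (inner ℝ v x : ℝ) = 0 ∧ (inner ℝ w x : ℝ) = 0 ∧ 0 < Bf x v v ∧ Bf x w w < 0)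
    (s u : ℝ) : Wf Bf s u ≠ 0 := by
  have hd := disc_lt Bf hsym hind s u
  intro h
  rw [Wf, Complex.ext_iff] at h
  simp only [Complex.add_re, Complex.add_im, Complex.ofReal_re, Complex.ofReal_im,
    Complex.mul_re, Complex.mul_im, Complex.I_re, Complex.I_im, Complex.zero_re,
    Complex.zero_im, Complex.re_ofNat, Complex.im_ofNat] at h
  obtain ⟨h1, h2⟩ := h
  have hpr : pf Bf s u = rf Bf s u := by linarith [h1]
  have hq : qf Bf s u = 0 := by linarith [h2]
  rw [hpr, hq] at hd
  nlinarith [sq_nonneg (rf Bf s u)]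

lemma W_cont (hBc : Continuous Bf) : Continuous fun z : ℝ × ℝ => Wf Bf z.1 z.2 := by
  have hxx : Continuous fun z : ℝ × ℝ => xx z.1 z.2 := by
    apply (PiLp.continuous_toLp 2 (fun _ : Fin 3 => ℝ)).comp
    apply continuous_pi
    intro i
    fin_cases i <;> simp <;> fun_prop
  have he1 : Continuous fun z : ℝ × ℝ => ee1 z.1 z.2 := by
    apply (PiLp.continuous_toLp 2 (fun _ : Fin 3 => ℝ)).comp
    apply continuous_pi
    intro i
    fin_cases i <;> simp <;> fun_prop
  have he2 : Continuous fun z : ℝ × ℝ => ee2 z.2 := by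
    apply (PiLp.continuous_toLp 2 (fun _ : Fin 3 => ℝ)).comp
    apply continuous_pi
    intro i
    fin_cases i <;> simp <;> fun_prop
  have happ : ∀ (g : ℝ × ℝ → E3) (hg : Continuous g),
      Continuous fun z : ℝ × ℝ => (Bf (xx z.1 z.2)) (g z) := fun g hg =>
    isBoundedBilinearMap_apply.continuous.comp ((hBc.comp hxx).prodMk hg)
  have happ2 : ∀ (g g' : ℝ × ℝ → E3) (hg : Continuous g) (hg' : Continuous g'),
      Continuous fun z : ℝ × ℝ => (Bf (xx z.1 z.2)) (g z) (g' z) := fun g g' hg hg' =>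
    isBoundedBilinearMap_apply.continuous.comp ((happ g hg).prodMk hg')
  have hp : Continuous fun z : ℝ × ℝ => pf Bf z.1 z.2 :=
    happ2 _ _ he1 he1
  have hq : Continuous fun z : ℝ × ℝ => qf Bf z.1 z.2 :=
    happ2 _ _ he1 he2
  have hr : Continuous fun z : ℝ × ℝ => rf Bf z.1 z.2 :=
    happ2 _ _ he2 he2
  unfold Wf
  continuity

end Wsection
end

set_option maxHeartbeats 2000000 in
theorem stmt_19 :
    (¬ ∃ B : EuclideanSpace ℝ (Fin 3) →
        (EuclideanSpace ℝ (Fin 3) →L[ℝ] EuclideanSpace ℝ (Fin 3) →L[ℝ] ℝ),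
      ContDiff ℝ (⊤ : ℕ∞) B ∧
      (∀ x v w, B x v w = B x w v) ∧
      (∀ x : EuclideanSpace ℝ (Fin 3), ‖x‖ = 1 →
        ∃ v w : EuclideanSpace ℝ (Fin 3),
          (inner ℝ v x : ℝ) = 0 ∧ (inner ℝ w x : ℝ) = 0 ∧
          0 < B x v v ∧ B x w w < 0)) ∧
    (∀ KI KII t : ℝ, 0 < KI → t < 1 - KI → KI = KII + (1 - t) → KII < 0) := by
  constructor
  · rintro ⟨B, hBs, hsym, hind⟩
    have hBc : Continuous B := hBs.continuous
    have h2π : (0:ℝ) ≤ 2*π := by positivity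
    have hWcont : Continuous fun z : ℝ × ℝ => Wf B z.1 z.2 := W_cont B hBc
    have hWne : ∀ s u, Wf B s u ≠ 0 := W_ne B hsym hind
    have hslice : ∀ s, Continuous fun u => Wf B s u := by
      intro s
      have h1 : Continuous fun u : ℝ => ((s, u) : ℝ × ℝ) :=
        continuous_const.prodMk continuous_id
      have h2 := hWcont.comp h1
      simp only [Function.comp_def] at h2
      exact h2
    have hex : ∀ s : ℝ, ∃ d : ℂ, ∀ ℓ : ℝ → ℂ, Continuous ℓ →
        (∀ t ∈ Icc 0 (2*π), Complex.exp (ℓ t) = Wf B s t) → ℓ (2*π) - ℓ 0 = d := by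
      intro s
      obtain ⟨ℓ₀, hc, hl⟩ := exists_lift (fun u => Wf B s u) (hslice s) (hWne s) 0 (2*π) h2π
      exact ⟨ℓ₀ (2*π) - ℓ₀ 0, fun ℓ hc' hl' => increment_unique hc' hc h2π hl' hl⟩
    choose Δ hΔ using hex
    have hloc : ∀ s : ℝ, ∃ ε > 0, ∀ s' : ℝ, |s' - s| < ε → Δ s' = Δ s := by
      intro s
      obtain ⟨u0, hu0, hmin⟩ := isCompact_Icc.exists_isMinOn (α := ℝ) ⟨0, le_refl 0, h2π⟩
        ((hslice s).norm.continuousOn (s := Icc 0 (2*π)))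
      set m : ℝ := ‖Wf B s u0‖ with hm
      have hmpos : 0 < m := norm_pos_iff.2 (hWne s u0)
      have hmle : ∀ u ∈ Icc 0 (2*π), m ≤ ‖Wf B s u‖ := fun u hu => hmin hu
      have hK : IsCompact ((Icc (s-1) (s+1)) ×ˢ (Icc 0 (2*π))) :=
        isCompact_Icc.prod isCompact_Icc
      have huc := hK.uniformContinuousOn_of_continuous hWcont.continuousOn
      rw [Metric.uniformContinuousOn_iff] at huc
      obtain ⟨δ, hδ, hδ'⟩ := huc m hmpos
      refine ⟨min δ 1, lt_min hδ one_pos, ?_⟩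
      intro s' hs'
      have hs1 : |s' - s| < 1 := lt_of_lt_of_le hs' (min_le_right _ _)
      have hsδ : |s' - s| < δ := lt_of_lt_of_le hs' (min_le_left _ _)
      have hs'mem : s' ∈ Icc (s-1) (s+1) := by
        obtain ⟨h1, h2⟩ := abs_lt.1 hs1
        constructor <;> linarith
      have hsmem : s ∈ Icc (s-1) (s+1) := ⟨by linarith, by linarith⟩
      have hclose : ∀ u ∈ Icc 0 (2*π), ‖Wf B s' u - Wf B s u‖ < m := by
        intro u hu
        have hd : dist ((s',u) : ℝ×ℝ) ((s,u) : ℝ×ℝ) < δ := by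
          rw [Prod.dist_eq]
          have : dist u u = 0 := dist_self u
          rw [this]
          rw [Real.dist_eq]
          rw [max_eq_left (abs_nonneg _)]
          exact hsδ
        have := hδ' (s',u) (Set.mem_prod.2 ⟨hs'mem, hu⟩) (s,u) (Set.mem_prod.2 ⟨hsmem, hu⟩) hd
        rw [dist_eq_norm] at this
        exact this
      obtain ⟨ℓ, hc, hl⟩ := exists_lift (fun u => Wf B s u) (hslice s) (hWne s) 0 (2*π) h2π
      set clmp : ℝ → ℝ := fun t => min (max t 0) (2*π) with hclmp
      have hclmpc : Continuous clmp := (continuous_id.max continuous_const).min continuous_const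
      have hclmem : ∀ t, clmp t ∈ Icc 0 (2*π) := fun t =>
        ⟨le_min (le_max_right _ _) h2π, min_le_right _ _⟩
      have hcleq : ∀ t ∈ Icc 0 (2*π), clmp t = t := by
        intro t ht
        rw [hclmp]
        simp only
        rw [max_eq_left ht.1, min_eq_left ht.2]
      set ρ : ℝ → ℂ := fun t => Wf B s' (clmp t) / Wf B s (clmp t) with hρ
      have hρslit : ∀ t, ρ t ∈ Complex.slitPlane := fun t =>
        ratio_slit (hWne s (clmp t))
          (lt_of_lt_of_le (hclose _ (hclmem t)) (hmle _ (hclmem t)))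
      have hρc : Continuous ρ := Continuous.div ((hslice s').comp hclmpc)
        ((hslice s).comp hclmpc) (fun t => hWne s (clmp t))
      have hl' : ∀ t ∈ Icc 0 (2*π),
          Complex.exp (ℓ t + Complex.log (ρ t)) = Wf B s' t := by
        intro t ht
        rw [Complex.exp_add, hl t ht, Complex.exp_log (by
          rw [hρ]; exact div_ne_zero (hWne s' _) (hWne s _)), hρ]
        simp only
        rw [hcleq t ht]
        rw [mul_div_assoc', mul_comm, mul_div_assoc, div_self (hWne s t), mul_one]
      have hΔs' := hΔ s' (fun t => ℓ t + Complex.log (ρ t))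
        (hc.add (hρc.clog hρslit)) hl'
      have hΔs := hΔ s ℓ hc hl
      have hρper : ρ (2*π) = ρ 0 := by
        rw [hρ]
        simp only
        rw [hcleq (2*π) ⟨h2π, le_refl (2*π)⟩, hcleq 0 ⟨le_refl 0, h2π⟩, W_per, W_per]
      rw [← hΔs', ← hΔs]
      rw [hρper]
      ring
    have hlc : IsLocallyConstant Δ := by
      rw [IsLocallyConstant.iff_exists_open]
      intro x
      obtain ⟨ε, hε, h⟩ := hloc x
      exact ⟨Metric.ball x ε, Metric.isOpen_ball, Metric.mem_ball_self hε,
        fun y hy => h y (by rwa [Metric.mem_ball, Real.dist_eq] at hy)⟩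
    have hΔconst : Δ 0 = Δ π :=
      hlc.apply_eq_of_isPreconnected isPreconnected_univ (Set.mem_univ 0) (Set.mem_univ π)
    have hΔ0 : Δ 0 = ((-(4*π) : ℝ) : ℂ) * Complex.I := by
      have hl0 : ∀ t ∈ Icc 0 (2*π),
          Complex.exp (((-(2*t) : ℝ) : ℂ) * Complex.I + Complex.log (Wf B 0 0))
            = Wf B 0 t := by
        intro t _
        rw [Complex.exp_add, Complex.exp_log (hWne 0 0), ← W_pole0 B hsym t]
      have hcont : Continuous fun t : ℝ =>
          ((-(2*t) : ℝ) : ℂ) * Complex.I + Complex.log (Wf B 0 0) := by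
        apply Continuous.add _ continuous_const
        apply Continuous.mul _ continuous_const
        exact Complex.continuous_ofReal.comp (by continuity)
      have h := hΔ 0 _ hcont hl0
      rw [← h]
      beta_reduce
      push_cast
      ring
    have hΔπ : Δ π = ((4*π : ℝ) : ℂ) * Complex.I := by
      have hlπ : ∀ t ∈ Icc 0 (2*π),
          Complex.exp (((2*t : ℝ) : ℂ) * Complex.I + Complex.log (Wf B π 0))
            = Wf B π t := by
        intro t _
        rw [Complex.exp_add, Complex.exp_log (hWne π 0), ← W_polepi B hsym t]
      have hcont : Continuous fun t : ℝ =>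
          ((2*t : ℝ) : ℂ) * Complex.I + Complex.log (Wf B π 0) := by
        apply Continuous.add _ continuous_const
        apply Continuous.mul _ continuous_const
        exact Complex.continuous_ofReal.comp (by continuity)
      have h := hΔ π _ hcont hlπ
      rw [← h]
      beta_reduce
      push_cast
      ring
    rw [hΔ0, hΔπ] at hΔconst
    have h8 : ((8*π : ℝ) : ℂ) * Complex.I = 0 := by
      push_cast at hΔconst ⊢
      linear_combination -hΔconst
    rcases mul_eq_zero.1 h8 with h | h
    · have : (8*π : ℝ) = 0 := Complex.ofReal_eq_zero.1 h
      nlinarith [Real.pi_pos]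
    · exact Complex.I_ne_zero h
  · intro KI KII t h1 h2 h3
    linarith
end
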